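/- Let T be a set and Q : T × T → ℂ. Define Ψ_π on functions f : T^n → ℂ by extending k ↦ Ψ_k multiplicatively along a reduced word for π. Then for every π ∈ S_n and f : T^n → ℂ, (Ψ_π f)(t) = Q_{π^{-1}}(t) · f(t_π), where t_π = (t_{π(1)},…,t_{π(n)}) and Q_π(t) = ∏_{1 ≤ i < j ≤ n, π(i) > π(j)} Q(t_i, t_j). In particular, Ψ_π is well defined (independent of the chosen reduced word). -/

import Mathlib

/-- `Q_π(t) = ∏_{i<j, π(i)>π(j)} Q(t_i, t_j)`. -/
def Qprod {T : Type*} (n : ℕ) (Q : T → T → ℂ) (π : Equiv.Perm (Fin n)) (t : Fin n → T) : ℂ :=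
  ∏ p ∈ Finset.univ.filter (fun p : Fin n × Fin n => p.1 < p.2 ∧ π p.2 < π p.1),
    Q (t p.1) (t p.2)

/-- The number of inversions of a permutation of `Fin n`. -/
def invCount {n : ℕ} (π : Equiv.Perm (Fin n)) : ℕ :=
  (Finset.univ.filter (fun p : Fin n × Fin n => p.1 < p.2 ∧ π p.2 < π p.1)).card

/-- The adjacent transposition `(j, j+1)` in `S_{n+1}`. -/
def adjSwap (n : ℕ) (j : Fin n) : Equiv.Perm (Fin (n + 1)) :=
  Equiv.swap j.castSucc j.succ

/-- The operator `Ψ_j`. -/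
def Psi {T : Type*} (n : ℕ) (Q : T → T → ℂ) (j : Fin n)
    (f : (Fin (n + 1) → T) → ℂ) : (Fin (n + 1) → T) → ℂ :=
  fun t => Q (t j.castSucc) (t j.succ) * f (t ∘ Equiv.swap j.castSucc j.succ)

/-- The product `Ψ_{j₁} ⋯ Ψ_{j_m}` of the operators `Ψ_j` along a word. -/
def PsiList {T : Type*} (n : ℕ) (Q : T → T → ℂ) :
    List (Fin n) → ((Fin (n + 1) → T) → ℂ) → ((Fin (n + 1) → T) → ℂ)
  | [], f => f
  | j :: L, f => Psi n Q j (PsiList n Q L f)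

/-!
Induct on the word `j :: L`, writing `π = s_j τ` with `τ` the product of `L`. Since `L` has
length at most `invCount τ` and `invCount (s_j τ) = invCount τ ± 1`, reducedness of `j :: L`
forces `L` to be reduced and `(j, j+1)` not to be an inversion of `τ⁻¹`. In that case the
inversions of `π⁻¹ = τ⁻¹ s_j` are those of `τ⁻¹` relabelled by `s_j`, together with `(j, j+1)`;
so `Q_{π⁻¹}(t) = Q(t_j, t_{j+1}) Q_{τ⁻¹}(t ∘ s_j)`, which is exactly the factor that `Ψ_j`
contributes in front of `Ψ_τ f` evaluated at `t ∘ s_j`.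
-/

open Finset Equiv

def inversions {m : ℕ} (π : Perm (Fin m)) : Finset (Fin m × Fin m) :=
  univ.filter fun p => p.1 < p.2 ∧ π p.2 < π p.1

lemma mem_inversions {m : ℕ} {π : Perm (Fin m)} {p : Fin m × Fin m} :
    p ∈ inversions π ↔ p.1 < p.2 ∧ π p.2 < π p.1 := by
  simp [inversions]

lemma invCount_eq_card_inversions {m : ℕ} (π : Perm (Fin m)) :
    invCount π = #(inversions π) := rfl

lemma Qprod_eq_prod_inversions {T : Type*} {m : ℕ} (Q : T → T → ℂ) (π : Perm (Fin m))
    (t : Fin m → T) : Qprod m Q π t = ∏ p ∈ inversions π, Q (t p.1) (t p.2) := rfl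

lemma inversions_one (m : ℕ) : inversions (1 : Perm (Fin m)) = ∅ := by
  ext p
  simp only [mem_inversions, Perm.one_apply, notMem_empty, iff_false, not_and, not_lt]
  exact le_of_lt

lemma invCount_one (m : ℕ) : invCount (1 : Perm (Fin m)) = 0 := by
  simp [invCount_eq_card_inversions, inversions_one]

lemma Qprod_one {T : Type*} (m : ℕ) (Q : T → T → ℂ) (t : Fin m → T) : Qprod m Q 1 t = 1 := by
  simp [Qprod_eq_prod_inversions, inversions_one]

lemma invCount_inv {m : ℕ} (π : Perm (Fin m)) : invCount π⁻¹ = invCount π := by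
  rw [invCount_eq_card_inversions, invCount_eq_card_inversions]
  refine card_bij (fun p _ => (π⁻¹ p.2, π⁻¹ p.1)) ?_ ?_ ?_
  · intro p hp
    rw [mem_inversions] at hp ⊢
    exact ⟨hp.2, by simpa using hp.1⟩
  · intro p _ q _ h
    simp only [Prod.mk.injEq, EmbeddingLike.apply_eq_iff_eq] at h
    exact Prod.ext h.2 h.1
  · intro q hq
    rw [mem_inversions] at hq
    exact ⟨(π q.2, π q.1), mem_inversions.2 ⟨hq.2, by simpa using hq.1⟩, by simp⟩

section AdjSwap

variable {n : ℕ} (j : Fin n)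

lemma adjSwap_inv : (adjSwap n j)⁻¹ = adjSwap n j := swap_inv _ _

lemma adjSwap_mul_self : adjSwap n j * adjSwap n j = 1 := swap_mul_self _ _

lemma adjSwap_lt_adjSwap_iff {a b : Fin (n + 1)} (h₁ : (a, b) ≠ (j.castSucc, j.succ))
    (h₂ : (a, b) ≠ (j.succ, j.castSucc)) : adjSwap n j a < adjSwap n j b ↔ a < b := by
  simp only [ne_eq, Prod.mk.injEq, Fin.ext_iff, Fin.val_castSucc, Fin.val_succ] at h₁ h₂
  simp only [adjSwap, swap_apply_def, Fin.lt_def]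
  split_ifs <;> simp only [Fin.ext_iff, Fin.val_castSucc, Fin.val_succ] at * <;> omega

variable (ρ : Perm (Fin (n + 1)))

lemma mem_inversions_mul_adjSwap (h : ρ j.castSucc < ρ j.succ)
    (p : Fin (n + 1) × Fin (n + 1)) :
    p ∈ inversions (ρ * adjSwap n j) ↔
      p = (j.castSucc, j.succ) ∨ (adjSwap n j p.1, adjSwap n j p.2) ∈ inversions ρ := by
  obtain ⟨a, b⟩ := p
  by_cases h₁ : (a, b) = (j.castSucc, j.succ)
  · simp_all [mem_inversions, adjSwap]
  by_cases h₂ : (a, b) = (j.succ, j.castSucc)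
  · simp_all [mem_inversions, adjSwap, (Fin.castSucc_lt_succ).not_gt, h.le]
  simp [mem_inversions, h₁, adjSwap_lt_adjSwap_iff j h₁ h₂]

lemma castSucc_succ_notMem_map_inversions :
    (j.castSucc, j.succ) ∉
      (inversions ρ).map ((adjSwap n j).prodCongr (adjSwap n j)).toEmbedding := by
  simp [mem_map_equiv, mem_inversions, adjSwap, (Fin.castSucc_lt_succ).not_gt]

lemma inversions_mul_adjSwap (h : ρ j.castSucc < ρ j.succ) :
    inversions (ρ * adjSwap n j) =
      cons (j.castSucc, j.succ)
        ((inversions ρ).map ((adjSwap n j).prodCongr (adjSwap n j)).toEmbedding)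
        (castSucc_succ_notMem_map_inversions j ρ) := by
  ext p
  rw [mem_inversions_mul_adjSwap j ρ h, mem_cons, mem_map_equiv]
  rfl

lemma invCount_mul_adjSwap_of_lt (h : ρ j.castSucc < ρ j.succ) :
    invCount (ρ * adjSwap n j) = invCount ρ + 1 := by
  rw [invCount_eq_card_inversions, invCount_eq_card_inversions, inversions_mul_adjSwap j ρ h,
    card_cons, card_map]

lemma invCount_mul_adjSwap_of_gt (h : ρ j.succ < ρ j.castSucc) :
    invCount (ρ * adjSwap n j) + 1 = invCount ρ := by
  have h' : (ρ * adjSwap n j) j.castSucc < (ρ * adjSwap n j) j.succ := by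
    simpa [adjSwap] using h
  rw [← invCount_mul_adjSwap_of_lt j _ h', mul_assoc, adjSwap_mul_self, mul_one]

lemma Qprod_mul_adjSwap {T : Type*} (Q : T → T → ℂ) (t : Fin (n + 1) → T)
    (h : ρ j.castSucc < ρ j.succ) :
    Qprod (n + 1) Q (ρ * adjSwap n j) t =
      Q (t j.castSucc) (t j.succ) * Qprod (n + 1) Q ρ (t ∘ adjSwap n j) := by
  rw [Qprod_eq_prod_inversions, Qprod_eq_prod_inversions, inversions_mul_adjSwap j ρ h,
    prod_cons, prod_map]
  rfl

lemma invCount_adjSwap_mul_of_lt (τ : Perm (Fin (n + 1))) (h : τ⁻¹ j.castSucc < τ⁻¹ j.succ) :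
    invCount (adjSwap n j * τ) = invCount τ + 1 := by
  rw [← invCount_inv, mul_inv_rev, adjSwap_inv, invCount_mul_adjSwap_of_lt j _ h, invCount_inv]

lemma invCount_adjSwap_mul_of_gt (τ : Perm (Fin (n + 1))) (h : τ⁻¹ j.succ < τ⁻¹ j.castSucc) :
    invCount (adjSwap n j * τ) + 1 = invCount τ := by
  rw [← invCount_inv, mul_inv_rev, adjSwap_inv, invCount_mul_adjSwap_of_gt j _ h, invCount_inv]

end AdjSwap

lemma invCount_prod_adjSwap_le {n : ℕ} (L : List (Fin n)) :
    invCount (L.map (adjSwap n)).prod ≤ L.length := by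
  induction L with
  | nil => simp [invCount_one]
  | cons j L ih =>
    rw [List.map_cons, List.prod_cons, List.length_cons]
    set τ := (L.map (adjSwap n)).prod
    rcases lt_or_gt_of_ne (τ⁻¹.injective.ne (Fin.castSucc_lt_succ (i := j)).ne) with h | h
    · rw [invCount_adjSwap_mul_of_lt j τ h]
      omega
    · have := invCount_adjSwap_mul_of_gt j τ h
      omega

lemma lt_and_length_eq_of_cons_reduced {n : ℕ} (j : Fin n) (L : List (Fin n))
    (hred : L.length + 1 = invCount (adjSwap n j * (L.map (adjSwap n)).prod)) :
    ((L.map (adjSwap n)).prod)⁻¹ j.castSucc < ((L.map (adjSwap n)).prod)⁻¹ j.succ ∧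
      L.length = invCount (L.map (adjSwap n)).prod := by
  have hle := invCount_prod_adjSwap_le L
  set τ := (L.map (adjSwap n)).prod
  rcases lt_or_gt_of_ne (τ⁻¹.injective.ne (Fin.castSucc_lt_succ (i := j)).ne) with h | h
  · rw [invCount_adjSwap_mul_of_lt j τ h] at hred
    exact ⟨h, by omega⟩
  · have := invCount_adjSwap_mul_of_gt j τ h
    omega

/-- For any reduced word `π = π_{j₁} ⋯ π_{j_m}`, the operator
`Ψ_π = Ψ_{j₁} ⋯ Ψ_{j_m}` satisfies `(Ψ_π f)(t) = Q_{π⁻¹}(t) f(t_π)`.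
In particular `Ψ_π` is independent of the chosen reduced word. -/
theorem PsiList_reduced_eq {T : Type*} {n : ℕ} (Q : T → T → ℂ)
    (π : Equiv.Perm (Fin (n + 1))) (L : List (Fin n))
    (hprod : (L.map (adjSwap n)).prod = π) (hred : L.length = invCount π)
    (f : (Fin (n + 1) → T) → ℂ) (t : Fin (n + 1) → T) :
    PsiList n Q L f t = Qprod (n + 1) Q π⁻¹ t * f (t ∘ π) := by
  subst hprod
  induction L generalizing t with
  | nil => simp [PsiList, Qprod_one]
  | cons j L ih =>
    rw [List.map_cons, List.prod_cons] at hred ⊢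
    obtain ⟨hlt, hredL⟩ := lt_and_length_eq_of_cons_reduced j L hred
    change Q _ _ * PsiList n Q L f (t ∘ adjSwap n j) = _
    rw [ih _ hredL, mul_inv_rev, adjSwap_inv, Qprod_mul_adjSwap j _ Q t hlt, mul_assoc]
    rfl
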